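/- Let θ ∈ (0, π/4] and let C = 1/(cos(θ/2) − sin(θ/2)). For all β ∈ [θ/2, θ] and γ = θ − β, it holds that C ≥ (cos γ − sin β)/(cos(θ/2 − β) − sin(θ/2 + γ)), assuming the denominator is positive. -/

import Mathlib

/-!
Put `x = β - θ/2 ∈ [0, θ/2]` and `k = cos (θ/2) - sin (θ/2) > 0`. The numerator factors as
`k (cos x - sin x)`, while the denominator equals `k² (cos x - sin x) + sin x (1 + cos θ - sin θ)`
because `k² = 1 - sin θ`. Since `sin x ≥ 0`, the denominator is at least `k` times the numerator.
-/

open Real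

namespace Real

theorem cos_sub_sin_eq_sqrt_two_mul_cos (x : ℝ) : cos x - sin x = √2 * cos (x + π / 4) := by
  rw [cos_add, cos_pi_div_four, sin_pi_div_four]
  ring_nf
  rw [sq_sqrt zero_le_two]
  ring

theorem sin_lt_cos_of_mem_Ioo {x : ℝ} (hx : x ∈ Set.Ioo (-(3 * π / 4)) (π / 4)) :
    sin x < cos x := by
  rw [← sub_pos, cos_sub_sin_eq_sqrt_two_mul_cos]
  exact mul_pos (by positivity) (cos_pos_of_mem_Ioo ⟨by linarith [hx.1], by linarith [hx.2]⟩)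

theorem cos_sub_sin_sq (x : ℝ) : (cos x - sin x) ^ 2 = 1 - sin (2 * x) := by
  rw [sin_two_mul]
  nlinarith [sin_sq_add_cos_sq x]

theorem cos_sub_sub_sin_add (a x : ℝ) :
    cos (a - x) - sin (a + x) = (cos a - sin a) * (cos x - sin x) := by
  rw [cos_sub, sin_add]
  ring

theorem cos_sub_sin_sub_eq (t x : ℝ) :
    cos x - sin (t - x) = (1 - sin t) * (cos x - sin x) + sin x * (1 + cos t - sin t) := by
  rw [sin_sub]
  ring

end Real

theorem stmt_19_general (θ β γ : ℝ) (h1 : θ ≤ π / 4)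
    (hβ : β ∈ Set.Icc (θ / 2) θ) (hγ : γ = θ - β)
    (hden : 0 < Real.cos (θ / 2 - β) - Real.sin (θ / 2 + γ)) :
    1 / (Real.cos (θ / 2) - Real.sin (θ / 2)) ≥
      (Real.cos γ - Real.sin β) /
        (Real.cos (θ / 2 - β) - Real.sin (θ / 2 + γ)) := by
  obtain ⟨hβ_lo, hβ_hi⟩ := hβ
  subst hγ
  obtain ⟨x, rfl⟩ : ∃ x, β = θ / 2 + x := ⟨β - θ / 2, by ring⟩
  have hθ : 0 ≤ θ := by linarith
  set k := cos (θ / 2) - sin (θ / 2)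
  have hk : 0 < k :=
    sub_pos.2 <| sin_lt_cos_of_mem_Ioo ⟨by linarith [pi_pos], by linarith [pi_pos]⟩
  have hk_sq : k ^ 2 = 1 - sin θ := by rw [cos_sub_sin_sq, mul_div_cancel₀ θ two_ne_zero]
  have hnum : cos (θ - (θ / 2 + x)) - sin (θ / 2 + x) = k * (cos x - sin x) := by
    rw [show θ - (θ / 2 + x) = θ / 2 - x by ring, cos_sub_sub_sin_add]
  have hden_eq : cos (θ / 2 - (θ / 2 + x)) - sin (θ / 2 + (θ - (θ / 2 + x)))
      = k ^ 2 * (cos x - sin x) + sin x * (1 + cos θ - sin θ) := by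
    rw [hk_sq, ← cos_sub_sin_sub_eq, show θ / 2 - (θ / 2 + x) = -x by ring, cos_neg,
      show θ / 2 + (θ - (θ / 2 + x)) = θ - x by ring]
  have hsin_x : 0 ≤ sin x := sin_nonneg_of_nonneg_of_le_pi (by linarith) (by linarith [pi_pos])
  have hcos_θ : 0 ≤ cos θ := cos_nonneg_of_mem_Icc ⟨by linarith [pi_pos], by linarith [pi_pos]⟩
  have hslack : 0 ≤ sin x * (1 + cos θ - sin θ) :=
    mul_nonneg hsin_x (by linarith [sin_le_one θ])
  rw [ge_iff_le, div_le_div_iff₀ hden hk, hnum, hden_eq]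
  linarith [show k * (cos x - sin x) * k = k ^ 2 * (cos x - sin x) by ring]

theorem stmt_19 (θ β γ : ℝ) (h0 : 0 < θ) (h1 : θ ≤ π / 4)
    (hβ : β ∈ Set.Icc (θ / 2) θ) (hγ : γ = θ - β)
    (hden : 0 < Real.cos (θ / 2 - β) - Real.sin (θ / 2 + γ)) :
    1 / (Real.cos (θ / 2) - Real.sin (θ / 2)) ≥
      (Real.cos γ - Real.sin β) /
        (Real.cos (θ / 2 - β) - Real.sin (θ / 2 + γ)) :=
  stmt_19_general θ β γ h1 hβ hγ hden
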